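/- arXiv:1702.01043 — 5 statements merged into one kernel-verified Lean document; each statement's English description precedes it below -/
import Mathlib

section
/- Let A ⊆ ℝⁿ be an open set and u : A → ℝ a locally Lipschitz function. Let I ⊆ ℝ be an open interval containing u(A), and let ψ : I → ℝ be a function of class C² with ψ'(t) > 0 for every t ∈ I. If the composite function v = ψ ∘ u is concave on every convex subset of A, then u is locally semiconcave in A. -/
/-!
On a compact `K ⊆ A` the function `u` is Lipschitz, with constant `L`, and takes values in a
compact interval `J ⊆ I`, on which `ψ' ≥ m > 0` and `ψ'' ≥ -M`. For `z = λx + (1-λ)y`,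
concavity of `ψ ∘ u` and `M`-semiconvexity of `ψ` on `J` give
`ψ(u z) ≥ λψ(u x) + (1-λ)ψ(u y) ≥ ψ(λ u x + (1-λ) u y) - (M/2) λ(1-λ) (u x - u y)²`.
As `ψ` grows at rate at least `m`, this forces
`u z ≥ λ u x + (1-λ) u y - (M/2m) λ(1-λ) (u x - u y)²`, and `|u x - u y| ≤ L |x - y|`
makes `M L² / m` a semiconcavity constant on `K`.
-/

open Set Metric

/-- A function `u` is locally semiconcave on an open set `A` if for every compact `K ⊆ A`
there is a constant `C ≥ 0` such that the semiconcavity inequality holds on every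
segment contained in `K`. -/
def LocallySemiconcaveOn {n : ℕ} (A : Set (EuclideanSpace ℝ (Fin n)))
    (u : EuclideanSpace ℝ (Fin n) → ℝ) : Prop :=
  ∀ K : Set (EuclideanSpace ℝ (Fin n)), K ⊆ A → IsCompact K →
    ∃ C : ℝ, 0 ≤ C ∧ ∀ x y : EuclideanSpace ℝ (Fin n), segment ℝ x y ⊆ K →
      ∀ l : ℝ, l ∈ Set.Icc (0:ℝ) 1 →
        l * u x + (1 - l) * u y - C * (l * (1 - l)) / 2 * ‖x - y‖ ^ 2
          ≤ u (l • x + (1 - l) • y)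

lemma IsCompact.exists_Icc_subset_of_ordConnected {S I : Set ℝ} (hS : IsCompact S)
    (hI : I.OrdConnected) (hSI : S ⊆ I) : ∃ a b, S ⊆ Icc a b ∧ Icc a b ⊆ I := by
  rcases S.eq_empty_or_nonempty with rfl | hne
  · exact ⟨1, 0, empty_subset _, by simp⟩
  exact ⟨sInf S, sSup S, fun x hx ↦ ⟨csInf_le hS.bddBelow hx, le_csSup hS.bddAbove hx⟩,
    hI.out (hSI (hS.sInf_mem hne)) (hSI (hS.sSup_mem hne))⟩

lemma LipschitzOnWith.sq_sub_le {E : Type*} [SeminormedAddCommGroup E] {f : E → ℝ}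
    {K : NNReal} {s : Set E} (hf : LipschitzOnWith K f s) {x y : E} (hx : x ∈ s) (hy : y ∈ s) :
    (f x - f y) ^ 2 ≤ K ^ 2 * ‖x - y‖ ^ 2 := by
  have h := hf.dist_le_mul x hx y hy
  rw [Real.dist_eq, dist_eq_norm] at h
  calc (f x - f y) ^ 2 = |f x - f y| ^ 2 := (sq_abs _).symm
    _ ≤ (K * ‖x - y‖) ^ 2 := by gcongr
    _ = K ^ 2 * ‖x - y‖ ^ 2 := mul_pow _ _ _

section SecondDerivative

variable {f : ℝ → ℝ} {U : Set ℝ}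

lemma convexOn_add_sq_of_neg_le_deriv_deriv (hU : IsOpen U) (hf : ContDiffOn ℝ 2 f U)
    {D : Set ℝ} (hD : Convex ℝ D) (hDU : D ⊆ U) {M : ℝ}
    (hM : ∀ r ∈ D, -M ≤ deriv (deriv f) r) :
    ConvexOn ℝ D fun r ↦ f r + M / 2 * r ^ 2 := by
  have hf' : ContDiffOn ℝ 1 (deriv f) U := hf.deriv_of_isOpen hU (by norm_num)
  have hint : interior D ⊆ U := interior_subset.trans hDU
  refine convexOn_of_hasDerivWithinAt2_nonneg (f' := fun r ↦ deriv f r + M * r)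
    (f'' := fun r ↦ deriv (deriv f) r + M) hD
    ((hf.continuousOn.mono hDU).add (by fun_prop)) (fun r hr ↦ ?_) (fun r hr ↦ ?_)
    (fun r hr ↦ by linarith [hM r (interior_subset hr)])
  · have hd := ((hf.differentiableOn (by norm_num)).differentiableAt
      (hU.mem_nhds (hint hr))).hasDerivAt
    refine (hd.add ((hasDerivAt_pow 2 r).const_mul (M / 2))).hasDerivWithinAt.congr_deriv ?_
    norm_num
    ring
  · have hd := ((hf'.differentiableOn one_ne_zero).differentiableAt
      (hU.mem_nhds (hint hr))).hasDerivAt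
    exact (hd.add ((hasDerivAt_id' r).const_mul M)).hasDerivWithinAt.congr_deriv
      (by rw [mul_one])

lemma ContDiffOn.exists_convexOn_add_sq_Icc (hU : IsOpen U) (hf : ContDiffOn ℝ 2 f U)
    {a b : ℝ} (hab : Icc a b ⊆ U) :
    ∃ M, 0 ≤ M ∧ ConvexOn ℝ (Icc a b) fun r ↦ f r + M / 2 * r ^ 2 := by
  have hf'' : ContinuousOn (deriv (deriv f)) U :=
    (hf.deriv_of_isOpen hU (by norm_num)).continuousOn_deriv_of_isOpen hU le_rfl
  obtain ⟨c, hc⟩ := isCompact_Icc.bddBelow_image (hf''.mono hab)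
  refine ⟨max (-c) 0, le_max_right _ _, convexOn_add_sq_of_neg_le_deriv_deriv hU hf
    (convex_Icc a b) hab fun r hr ↦ ?_⟩
  linarith [hc (mem_image_of_mem _ hr), le_max_left (-c) 0]

lemma ContDiffOn.exists_pos_mul_sub_le_sub_Icc (hU : IsOpen U) (hf : ContDiffOn ℝ 2 f U)
    (hf_pos : ∀ r ∈ U, 0 < deriv f r) {a b : ℝ} (hab : Icc a b ⊆ U) :
    ∃ m, 0 < m ∧
      ∀ t ∈ Icc a b, ∀ s ∈ Icc a b, t ≤ s → m * (s - t) ≤ f s - f t := by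
  obtain ⟨m, hm, hmf⟩ := isCompact_Icc.exists_forall_le'
    ((hf.continuousOn_deriv_of_isOpen hU (by norm_num)).mono hab) fun r hr ↦ hf_pos r (hab hr)
  exact ⟨m, hm, (convex_Icc a b).mul_sub_le_image_sub_of_le_deriv (hf.continuousOn.mono hab)
    ((hf.differentiableOn (by norm_num)).mono (interior_subset.trans hab))
    fun r hr ↦ hmf r (interior_subset hr)⟩

end SecondDerivative

lemma le_add_mul_sq_of_convexOn_add_sq {f : ℝ → ℝ} {D : Set ℝ} {M : ℝ}
    (hf : ConvexOn ℝ D fun r ↦ f r + M / 2 * r ^ 2) {p q l : ℝ} (hp : p ∈ D) (hq : q ∈ D)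
    (hl : l ∈ Icc (0 : ℝ) 1) :
    f (l * p + (1 - l) * q) ≤
      l * f p + (1 - l) * f q + M / 2 * (l * (1 - l)) * (p - q) ^ 2 := by
  have h := hf.2 hp hq hl.1 (sub_nonneg.2 hl.2) (by ring)
  simp only [smul_eq_mul] at h
  linear_combination h

lemma sub_le_of_combo_le_apply_of_semiconvex {f : ℝ → ℝ} {J : Set ℝ} (hJ : Convex ℝ J)
    {m M : ℝ} (hm : 0 < m) (hM : 0 ≤ M) (hconv : ConvexOn ℝ J fun r ↦ f r + M / 2 * r ^ 2)
    (hinc : ∀ t ∈ J, ∀ s ∈ J, t ≤ s → m * (s - t) ≤ f s - f t)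
    {p q t l : ℝ} (hp : p ∈ J) (hq : q ∈ J) (ht : t ∈ J) (hl : l ∈ Icc (0 : ℝ) 1)
    (hle : l * f p + (1 - l) * f q ≤ f t) :
    l * p + (1 - l) * q - M / m * (l * (1 - l)) / 2 * (p - q) ^ 2 ≤ t := by
  set s := l * p + (1 - l) * q
  have hpen_nonneg : 0 ≤ M / m * (l * (1 - l)) / 2 * (p - q) ^ 2 := by
    have := mul_nonneg hl.1 (sub_nonneg.2 hl.2)
    positivity
  rcases le_total s t with hst | hts
  · linarith
  have hs : s ∈ J := by
    simpa [smul_eq_mul] using hJ hp hq hl.1 (sub_nonneg.2 hl.2) (by ring)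
  have hsemi := le_add_mul_sq_of_convexOn_add_sq hconv hp hq hl
  have hmain : m * (s - t) ≤ M / 2 * (l * (1 - l)) * (p - q) ^ 2 := by
    linarith [hinc t ht s hs hts]
  rw [sub_le_comm]
  calc s - t ≤ M / 2 * (l * (1 - l)) * (p - q) ^ 2 / m := by rw [le_div_iff₀ hm]; linarith
    _ = M / m * (l * (1 - l)) / 2 * (p - q) ^ 2 := by ring

theorem semiconcavity_from_concave_composition_general
    {n : ℕ} (A : Set (EuclideanSpace ℝ (Fin n)))
    (u : EuclideanSpace ℝ (Fin n) → ℝ)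
    (hLip : ∀ x ∈ A, ∃ (L : NNReal) (t : Set (EuclideanSpace ℝ (Fin n))),
      t ∈ nhds x ∧ LipschitzOnWith L u t)
    (I : Set ℝ) (hIopen : IsOpen I) (hIinterval : I.OrdConnected)
    (hrange : u '' A ⊆ I)
    (ψ : ℝ → ℝ) (hψ : ContDiffOn ℝ 2 ψ I)
    (hψ' : ∀ t ∈ I, 0 < deriv ψ t)
    (hconc : ∀ S : Set (EuclideanSpace ℝ (Fin n)), S ⊆ A → Convex ℝ S →
      ConcaveOn ℝ S (fun x => ψ (u x))) :
    LocallySemiconcaveOn A u := by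
  intro K hKA hK
  have huK : LocallyLipschitzOn K u := fun x hx ↦
    let ⟨L, t, ht, hL⟩ := hLip x (hKA hx)
    ⟨L, t, mem_nhdsWithin_of_mem_nhds ht, hL⟩
  obtain ⟨L, hL⟩ := huK.exists_lipschitzOnWith_of_compact hK
  obtain ⟨a, b, hKab, habI⟩ := (hK.image_of_continuousOn huK.continuousOn)
    |>.exists_Icc_subset_of_ordConnected hIinterval ((image_mono hKA).trans hrange)
  obtain ⟨M, hM, hconv⟩ := hψ.exists_convexOn_add_sq_Icc hIopen habI
  obtain ⟨m, hm, hinc⟩ := hψ.exists_pos_mul_sub_le_sub_Icc hIopen hψ' habI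
  refine ⟨M / m * L ^ 2, by positivity, fun x y hxy l hl ↦ ?_⟩
  have hx := hxy (left_mem_segment ℝ x y)
  have hy := hxy (right_mem_segment ℝ x y)
  have hz := hxy ⟨l, 1 - l, hl.1, sub_nonneg.2 hl.2, by ring, rfl⟩
  have hcomb : l * ψ (u x) + (1 - l) * ψ (u y) ≤ ψ (u (l • x + (1 - l) • y)) := by
    simpa using (hconc _ (hxy.trans hKA) (convex_segment x y)).2 (left_mem_segment ℝ x y)
      (right_mem_segment ℝ x y) hl.1 (sub_nonneg.2 hl.2) (by ring)
  have hu := sub_le_of_combo_le_apply_of_semiconvex (convex_Icc a b) hm hM hconv hinc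
    (hKab ⟨x, hx, rfl⟩) (hKab ⟨y, hy, rfl⟩) (hKab ⟨_, hz, rfl⟩) hl hcomb
  have hl' := mul_nonneg hl.1 (sub_nonneg.2 hl.2)
  have hpen : M / m * (l * (1 - l)) / 2 * (u x - u y) ^ 2
      ≤ M / m * L ^ 2 * (l * (1 - l)) / 2 * ‖x - y‖ ^ 2 :=
    calc _ ≤ M / m * (l * (1 - l)) / 2 * (L ^ 2 * ‖x - y‖ ^ 2) := by
          gcongr
          exact hL.sq_sub_le hx hy
      _ = _ := by ring
  linarith

theorem semiconcavity_from_concave_composition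
    {n : ℕ} (A : Set (EuclideanSpace ℝ (Fin n))) (hA : IsOpen A)
    (u : EuclideanSpace ℝ (Fin n) → ℝ)
    (hLip : ∀ x ∈ A, ∃ (L : NNReal) (t : Set (EuclideanSpace ℝ (Fin n))),
      t ∈ nhds x ∧ LipschitzOnWith L u t)
    (I : Set ℝ) (hIopen : IsOpen I) (hIinterval : I.OrdConnected)
    (hrange : u '' A ⊆ I)
    (ψ : ℝ → ℝ) (hψ : ContDiffOn ℝ 2 ψ I)
    (hψ' : ∀ t ∈ I, 0 < deriv ψ t)
    (hconc : ∀ S : Set (EuclideanSpace ℝ (Fin n)), S ⊆ A → Convex ℝ S →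
      ConcaveOn ℝ S (fun x => ψ (u x))) :
    LocallySemiconcaveOn A u :=
  semiconcavity_from_concave_composition_general A u hLip I hIopen hIinterval hrange ψ hψ hψ' hconc
end

section
/- Let U ⊆ ℝⁿ be an open set and let v : U → ℝ be differentiable with locally Lipschitz gradient. Let a < b be real numbers such that the set K := {x ∈ U : a ≤ v(x) ≤ b} is compact and there exists α > 0 with |∇v(x)| ≥ α for every x ∈ K. Then for every x₀ ∈ K there exist T ∈ [0, (b − a)/α] and a C¹ curve γ : [0, T] → K solving the normalized gradient flow γ'(t) = ∇v(γ(t))/|∇v(γ(t))| with γ(0) = x₀ and v(γ(T)) = b. -/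
open Set Metric

/-!
The field `F = normalize (∇v)` has norm at most one, and it is Lipschitz wherever `∇v` is Lipschitz
and bounded away from `0`. By the Lebesgue number lemma there is one radius `ρ > 0` such that `F` is
Lipschitz on the `ρ`-ball around every point of the compact set `K`, so Picard–Lindelöf continues
any flow line ending in `K` for a time `ρ / 2`. Along a flow line `v` grows at speed `|∇v|`, so the
continuation stays in `K` until `v` reaches `b` (intermediate value theorem). Inside `K` the speed
is at least `α`, so a flow line in `K` lives at most for time `(b - a) / α`: after finitely many
continuations the level `b` is reached.
-/

open NormedSpace
open scoped NNReal

section Normalize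

variable {E : Type*} [NormedAddCommGroup E] [NormedSpace ℝ E]

theorem NormedSpace.norm_normalize_le_one (x : E) : ‖normalize x‖ ≤ 1 := by
  rcases eq_or_ne x 0 with rfl | hx
  · simp [normalize_zero_eq_zero]
  · exact (norm_normalize hx).le

theorem NormedSpace.norm_normalize_sub_normalize_le {x : E} (hx : x ≠ 0) (y : E) :
    ‖normalize x - normalize y‖ ≤ 2 / ‖x‖ * ‖x - y‖ := by
  have hx' : 0 < ‖x‖ := norm_pos_iff.2 hx
  have hsplit : normalize x - normalize y =
      ‖x‖⁻¹ • (x - y) + (‖x‖⁻¹ * ‖y‖ - 1) • normalize y := by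
    rw [sub_smul, one_smul, mul_smul, norm_smul_normalize, smul_sub, NormedSpace.normalize]
    abel
  have hscale : |‖x‖⁻¹ * ‖y‖ - 1| ≤ ‖x - y‖ / ‖x‖ := by
    rw [show ‖x‖⁻¹ * ‖y‖ - 1 = (‖y‖ - ‖x‖) / ‖x‖ by field_simp, abs_div, abs_of_pos hx',
      abs_sub_comm]
    gcongr
    exact abs_norm_sub_norm_le x y
  calc ‖normalize x - normalize y‖
      ≤ ‖‖x‖⁻¹ • (x - y)‖ + ‖(‖x‖⁻¹ * ‖y‖ - 1) • normalize y‖ := hsplit ▸ norm_add_le _ _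
    _ = ‖x - y‖ / ‖x‖ + |‖x‖⁻¹ * ‖y‖ - 1| * ‖normalize y‖ := by
        rw [norm_smul, norm_smul, norm_inv, norm_norm, Real.norm_eq_abs, inv_mul_eq_div]
    _ ≤ ‖x - y‖ / ‖x‖ + ‖x - y‖ / ‖x‖ * 1 := by
        gcongr
        exact norm_normalize_le_one y
    _ = 2 / ‖x‖ * ‖x - y‖ := by ring

theorem LipschitzOnWith.normalize {X : Type*} [PseudoMetricSpace X] {g : X → E} {L c : ℝ≥0}
    {s : Set X} (hg : LipschitzOnWith L g s) (hc : 0 < c) (hgs : ∀ x ∈ s, c ≤ ‖g x‖) :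
    LipschitzOnWith (2 / c * L) (fun x => normalize (g x)) s := by
  refine LipschitzOnWith.of_dist_le_mul fun x hx y hy => ?_
  have hgx : g x ≠ 0 := norm_pos_iff.1 ((NNReal.coe_pos.2 hc).trans_le (hgs x hx))
  rw [dist_eq_norm]
  calc ‖NormedSpace.normalize (g x) - NormedSpace.normalize (g y)‖ ≤ 2 / ‖g x‖ * ‖g x - g y‖ :=
        norm_normalize_sub_normalize_le hgx _
    _ ≤ 2 / c * (L * dist x y) := by
        rw [← dist_eq_norm]
        gcongr
        exacts [hgs x hx, hg.dist_le_mul x hx y hy]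
    _ = ↑(2 / c * L) * dist x y := by push_cast; ring

end Normalize

theorem IsCompact.exists_forall_lipschitzOnWith_normalize {X E : Type*} [PseudoMetricSpace X]
    [NormedAddCommGroup E] [NormedSpace ℝ E] {K U : Set X} {g : X → E} {α : ℝ}
    (hK : IsCompact K) (hα : 0 < α) (hgK : ∀ x ∈ K, α ≤ ‖g x‖)
    (hg : ∀ x ∈ K, ∃ (L : ℝ≥0) (r : ℝ), 0 < r ∧ ball x r ⊆ U ∧ LipschitzOnWith L g (ball x r)) :
    ∃ ρ > 0, ∀ y ∈ K, closedBall y ρ ⊆ U ∧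
      ∃ L : ℝ≥0, LipschitzOnWith L (fun x => normalize (g x)) (closedBall y ρ) := by
  choose L r hr hrU hLip using hg
  obtain ⟨δ, hδ, hcover⟩ := lebesgue_number_lemma_of_metric hK
    (c := fun x : K => ball x.1 (r x x.2) ∩ (fun z => ‖g z‖) ⁻¹' Ioi (α / 2))
    (fun x => (hLip x x.2).continuousOn.norm.isOpen_inter_preimage isOpen_ball isOpen_Ioi)
    (fun y hy => mem_iUnion.2 ⟨⟨y, hy⟩, mem_ball_self (hr y hy),
      show α / 2 < ‖g y‖ by linarith [hgK y hy]⟩)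
  refine ⟨δ / 2, half_pos hδ, fun y hy => ?_⟩
  obtain ⟨⟨x, hx⟩, hyx⟩ := hcover y hy
  have hsub := (closedBall_subset_ball (half_lt_self hδ)).trans hyx
  have hlow : ∀ z ∈ closedBall y (δ / 2), ((α / 2).toNNReal : ℝ) ≤ ‖g z‖ := fun z hz => by
    rw [Real.coe_toNNReal _ (by positivity)]
    exact (hsub hz).2.le
  exact ⟨(hsub.trans inter_subset_left).trans (hrU x hx), _,
    ((hLip x hx).mono (hsub.trans inter_subset_left)).normalize (by simpa using hα) hlow⟩

theorem mul_sub_le_sub_of_le_hasDerivAt {g g' : ℝ → ℝ} {C t₁ t₂ : ℝ} (h₁₂ : t₁ ≤ t₂)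
    (hg : ∀ t ∈ Icc t₁ t₂, HasDerivAt g (g' t) t) (hC : ∀ t ∈ Icc t₁ t₂, C ≤ g' t) :
    C * (t₂ - t₁) ≤ g t₂ - g t₁ := by
  refine (convex_Icc t₁ t₂).mul_sub_le_image_sub_of_le_deriv
    (fun t ht => (hg t ht).continuousAt.continuousWithinAt)
    (fun t ht => (hg t (interior_subset ht)).differentiableAt.differentiableWithinAt)
    (fun t ht => (hg t (interior_subset ht)).deriv ▸ hC t (interior_subset ht))
    t₁ (left_mem_Icc.2 h₁₂) t₂ (right_mem_Icc.2 h₁₂) h₁₂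

theorem hasDerivAt_of_hasDerivWithinAt_Iic_Ici {E : Type*} [NormedAddCommGroup E]
    [NormedSpace ℝ E] {f : ℝ → E} {f' : E} {s t : ℝ}
    (hleft : t ≤ s → HasDerivWithinAt f f' (Iic s) t)
    (hright : s ≤ t → HasDerivWithinAt f f' (Ici s) t) : HasDerivAt f f' t := by
  have h₁ : HasDerivWithinAt f f' (Iic s) t := by
    by_cases h : t ≤ s
    · exact hleft h
    · exact HasFDerivWithinAt.of_notMem_closure (by rwa [closure_Iic, mem_Iic])
  have h₂ : HasDerivWithinAt f f' (Ici s) t := by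
    by_cases h : s ≤ t
    · exact hright h
    · exact HasFDerivWithinAt.of_notMem_closure (by rwa [closure_Ici, mem_Ici])
  simpa only [Iic_union_Ici, hasDerivWithinAt_univ] using h₁.union h₂

theorem exists_hasDerivAt_mem_closedBall {E : Type*} [NormedAddCommGroup E] [NormedSpace ℝ E]
    [CompleteSpace E] {F : E → E} (hF : ∀ x, ‖F x‖ ≤ 1) {x₀ : E} {r : ℝ} (hr : 0 ≤ r)
    {L : ℝ≥0} (hL : LipschitzOnWith L F (closedBall x₀ r)) (t₀ : ℝ) :
    ∃ γ : ℝ → E, γ t₀ = x₀ ∧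
      ∀ t ∈ Ioo (t₀ - r) (t₀ + r), γ t ∈ closedBall x₀ r ∧ HasDerivAt γ (F (γ t)) t := by
  have hPL : IsPicardLindelof (fun _ => F) (tmin := t₀ - r) (tmax := t₀ + r)
      ⟨t₀, by constructor <;> linarith⟩ x₀ ⟨r, hr⟩ 0 1 L :=
    .of_time_independent (fun x _ => hF x) hL (by simp; rfl)
  obtain ⟨γ, hγ₀, hγ⟩ := hPL.exists_eq_forall_mem_Icc_hasDerivWithinAt₀
  refine ⟨γ, hγ₀, fun t ht => ⟨?_, (hγ t (Ioo_subset_Icc_self ht)).hasDerivAt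
    (Icc_mem_nhds ht.1 ht.2)⟩⟩
  have hdist := (convex_Icc _ _).norm_image_sub_le_of_norm_hasDerivWithin_le hγ
    (fun t _ => hF (γ t)) (show t₀ ∈ Icc (t₀ - r) (t₀ + r) by constructor <;> linarith)
    (Ioo_subset_Icc_self ht)
  rw [mem_closedBall, dist_eq_norm, ← hγ₀]
  refine hdist.trans ?_
  rw [one_mul, Real.norm_eq_abs, abs_le]
  constructor <;> linarith [ht.1, ht.2]

section FlowLine

variable {E : Type*} [NormedAddCommGroup E] [NormedSpace ℝ E]

def IsFlowLineIn (F : E → E) (K : Set E) (γ : ℝ → E) (T : ℝ) : Prop :=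
  ∀ t ∈ Icc 0 T, γ t ∈ K ∧ HasDerivAt γ (F (γ t)) t

theorem IsFlowLineIn.exists_glue {F : E → E} {K : Set E} {γ δ : ℝ → E} {T s : ℝ}
    (hγ : IsFlowLineIn F K γ T) (hδ : ∀ t ∈ Icc T s, δ t ∈ K ∧ HasDerivAt δ (F (δ t)) t)
    (hT : 0 ≤ T) (hTs : T ≤ s) (hjoin : δ T = γ T) :
    ∃ η : ℝ → E, η 0 = γ 0 ∧ η s = δ s ∧ IsFlowLineIn F K η s := by
  set η : ℝ → E := fun t => if t ≤ T then γ t else δ t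
  have hηγ : ∀ t ∈ Iic T, η t = γ t := fun t ht => if_pos ht
  have hηδ : ∀ t ∈ Ici T, η t = δ t := by
    intro t ht
    rcases (mem_Ici.1 ht).eq_or_lt with rfl | h
    · exact (if_pos le_rfl).trans hjoin.symm
    · exact if_neg (not_le.2 h)
  refine ⟨η, hηγ 0 hT, hηδ s hTs, fun t ht => ⟨?_, ?_⟩⟩
  · by_cases h : t ≤ T
    · exact hηγ t h ▸ (hγ t ⟨ht.1, h⟩).1
    · exact hηδ t (not_le.1 h).le ▸ (hδ t ⟨(not_le.1 h).le, ht.2⟩).1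
  · refine hasDerivAt_of_hasDerivWithinAt_Iic_Ici (s := T) (fun h => ?_) (fun h => ?_)
    · rw [hηγ t h]
      exact (hγ t ⟨ht.1, h⟩).2.hasDerivWithinAt.congr hηγ (hηγ t h)
    · rw [hηδ t h]
      exact (hδ t ⟨h, ht.2⟩).2.hasDerivWithinAt.congr hηδ (hηδ t h)

end FlowLine

theorem real_inner_self_normalize {E : Type*} [NormedAddCommGroup E] [InnerProductSpace ℝ E]
    (x : E) : inner ℝ x (normalize x) = ‖x‖ := by
  rcases eq_or_ne x 0 with rfl | hx
  · simp
  · rw [NormedSpace.normalize, real_inner_smul_right, real_inner_self_eq_norm_sq]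
    field_simp

section GradientFlow

variable {E : Type*} [NormedAddCommGroup E] [InnerProductSpace ℝ E] [CompleteSpace E]
  {v : E → ℝ}

theorem DifferentiableAt.hasDerivAt_comp_of_normalize_gradient {γ : ℝ → E} {t : ℝ}
    (hv : DifferentiableAt ℝ v (γ t)) (hγ : HasDerivAt γ (normalize (gradient v (γ t))) t) :
    HasDerivAt (fun s => v (γ s)) ‖gradient v (γ t)‖ t := by
  have := hv.hasFDerivAt.comp_hasDerivAt t hγ
  rwa [← inner_gradient_left, real_inner_self_normalize] at this

theorem mul_sub_le_sub_of_normalize_gradient {γ : ℝ → E} {C t₁ t₂ : ℝ} (h₁₂ : t₁ ≤ t₂)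
    (hγ : ∀ t ∈ Icc t₁ t₂, DifferentiableAt ℝ v (γ t) ∧ C ≤ ‖gradient v (γ t)‖ ∧
      HasDerivAt γ (normalize (gradient v (γ t))) t) :
    C * (t₂ - t₁) ≤ v (γ t₂) - v (γ t₁) :=
  mul_sub_le_sub_of_le_hasDerivAt h₁₂
    (fun t ht => (hγ t ht).1.hasDerivAt_comp_of_normalize_gradient (hγ t ht).2.2)
    (fun t ht => (hγ t ht).2.1)

variable {U : Set E} {a b ρ : ℝ}

theorem IsFlowLineIn.exists_extend_normalize_gradient (hdiff : ∀ x ∈ U, DifferentiableAt ℝ v x)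
    (hρ : 0 < ρ) (hball : ∀ y ∈ {x ∈ U | a ≤ v x ∧ v x ≤ b}, closedBall y ρ ⊆ U ∧
      ∃ L : ℝ≥0, LipschitzOnWith L (fun x => normalize (gradient v x)) (closedBall y ρ))
    {γ : ℝ → E} {T : ℝ} (hT : 0 ≤ T)
    (hγ : IsFlowLineIn (fun x => normalize (gradient v x)) {x ∈ U | a ≤ v x ∧ v x ≤ b} γ T)
    (hγb : v (γ T) < b) :
    ∃ s ≥ T, ∃ η : ℝ → E, η 0 = γ 0 ∧
      IsFlowLineIn (fun x => normalize (gradient v x)) {x ∈ U | a ≤ v x ∧ v x ≤ b} η s ∧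
      (v (η s) = b ∨ s = T + ρ / 2) := by
  have hγT := (hγ T ⟨hT, le_rfl⟩).1
  obtain ⟨hballU, L, hL⟩ := hball _ hγT
  obtain ⟨δ, hδT, hδ⟩ :=
    exists_hasDerivAt_mem_closedBall (fun _ => norm_normalize_le_one _) hρ.le hL T
  have hδgrad : ∀ t ∈ Icc T (T + ρ / 2), DifferentiableAt ℝ v (δ t) ∧ 0 ≤ ‖gradient v (δ t)‖ ∧
      HasDerivAt δ (normalize (gradient v (δ t))) t := fun t ht =>
    have h := hδ t ⟨by linarith [ht.1], by linarith [ht.2]⟩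
    ⟨hdiff _ (hballU h.1), norm_nonneg _, h.2⟩
  have hmono : ∀ t₁ ∈ Icc T (T + ρ / 2), ∀ t₂ ∈ Icc T (T + ρ / 2), t₁ ≤ t₂ →
      v (δ t₁) ≤ v (δ t₂) := fun t₁ ht₁ t₂ ht₂ h₁₂ => by
    have := mul_sub_le_sub_of_normalize_gradient h₁₂ fun t ht =>
      hδgrad t ⟨ht₁.1.trans ht.1, ht.2.trans ht₂.2⟩
    linarith
  obtain ⟨s, hs, hδs, hstop⟩ : ∃ s ∈ Icc T (T + ρ / 2), v (δ s) ≤ b ∧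
      (v (δ s) = b ∨ s = T + ρ / 2) := by
    by_cases h : v (δ (T + ρ / 2)) ≤ b
    · exact ⟨T + ρ / 2, ⟨by linarith, le_rfl⟩, h, Or.inr rfl⟩
    · have hcont : ContinuousOn (fun t => v (δ t)) (Icc T (T + ρ / 2)) := fun t ht =>
        ((hδgrad t ht).1.hasDerivAt_comp_of_normalize_gradient (hδgrad t ht).2.2).continuousAt
          |>.continuousWithinAt
      obtain ⟨s, hs, hvs⟩ := intermediate_value_Icc (by linarith) hcont
        ⟨hδT ▸ hγb.le, (not_le.1 h).le⟩
      exact ⟨s, hs, hvs.le, Or.inl hvs⟩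
  have hδK : ∀ t ∈ Icc T s, δ t ∈ {x ∈ U | a ≤ v x ∧ v x ≤ b} ∧
      HasDerivAt δ (normalize (gradient v (δ t))) t := fun t ht => by
    have ht' : t ∈ Icc T (T + ρ / 2) := ⟨ht.1, ht.2.trans hs.2⟩
    refine ⟨⟨hballU (hδ t ⟨by linarith [ht'.1], by linarith [ht'.2]⟩).1, ?_, ?_⟩, (hδgrad t ht').2.2⟩
    · exact hγT.2.1.trans (hδT ▸ hmono T (left_mem_Icc.2 (by linarith)) t ht' ht.1)
    · exact (hmono t ht' s hs ht.2).trans hδs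
  obtain ⟨η, hη0, hηs, hη⟩ := hγ.exists_glue hδK hT hs.1 hδT
  exact ⟨s, hs.1, η, hη0, hη, hηs ▸ hstop⟩

theorem exists_isFlowLineIn_normalize_gradient (hdiff : ∀ x ∈ U, DifferentiableAt ℝ v x)
    (hρ : 0 < ρ) (hball : ∀ y ∈ {x ∈ U | a ≤ v x ∧ v x ≤ b}, closedBall y ρ ⊆ U ∧
      ∃ L : ℝ≥0, LipschitzOnWith L (fun x => normalize (gradient v x)) (closedBall y ρ))
    {x₀ : E} (hx₀ : x₀ ∈ {x ∈ U | a ≤ v x ∧ v x ≤ b}) (m : ℕ) :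
    ∃ T ≥ 0, ∃ γ : ℝ → E, γ 0 = x₀ ∧
      IsFlowLineIn (fun x => normalize (gradient v x)) {x ∈ U | a ≤ v x ∧ v x ≤ b} γ T ∧
      (v (γ T) = b ∨ T = m * (ρ / 2)) := by
  induction m with
  | zero =>
    refine ⟨0, le_rfl, fun t => x₀ + t • normalize (gradient v x₀), by simp, ?_, by simp⟩
    rintro t ⟨ht₀, ht₀'⟩
    obtain rfl : t = 0 := le_antisymm ht₀' ht₀
    refine ⟨by simpa using hx₀, ?_⟩
    simpa using ((hasDerivAt_id (0 : ℝ)).smul_const (normalize (gradient v x₀))).const_add x₀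
  | succ m ih =>
    obtain ⟨T, hT, γ, hγ0, hγ, hend⟩ := ih
    by_cases hb : v (γ T) = b
    · exact ⟨T, hT, γ, hγ0, hγ, Or.inl hb⟩
    have hγb : v (γ T) < b := (hγ T ⟨hT, le_rfl⟩).1.2.2.lt_of_ne hb
    obtain ⟨s, hs, η, hη0, hη, hend'⟩ := hγ.exists_extend_normalize_gradient hdiff hρ hball hT hγb
    refine ⟨s, hT.trans hs, η, hη0.trans hγ0, hη, hend'.imp_right fun h => ?_⟩
    rw [h, hend.resolve_left hb]
    push_cast
    ring

end GradientFlow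

theorem normalized_gradient_flow_reaches_level_general
    {n : ℕ} (U : Set (EuclideanSpace ℝ (Fin n)))
    (v : EuclideanSpace ℝ (Fin n) → ℝ)
    (hdiff : ∀ x ∈ U, DifferentiableAt ℝ v x)
    (hgradLip : ∀ x ∈ U, ∃ (L : NNReal) (r : ℝ), 0 < r ∧ Metric.ball x r ⊆ U ∧
      LipschitzOnWith L (fun y => gradient v y) (Metric.ball x r))
    (a b : ℝ)
    (hKcompact : IsCompact {x ∈ U | a ≤ v x ∧ v x ≤ b})
    (α : ℝ) (hα : 0 < α)
    (hgrad : ∀ x ∈ {x ∈ U | a ≤ v x ∧ v x ≤ b}, α ≤ ‖gradient v x‖) :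
    ∀ x₀ ∈ {x ∈ U | a ≤ v x ∧ v x ≤ b},
      ∃ T : ℝ, T ∈ Set.Icc 0 ((b - a) / α) ∧
        ∃ γ : ℝ → EuclideanSpace ℝ (Fin n),
          γ 0 = x₀ ∧
          (∀ t ∈ Set.Icc 0 T, γ t ∈ {x ∈ U | a ≤ v x ∧ v x ≤ b}) ∧
          (∀ t ∈ Set.Icc 0 T,
            HasDerivAt γ (‖gradient v (γ t)‖⁻¹ • gradient v (γ t)) t) ∧
          v (γ T) = b := by
  intro x₀ hx₀
  obtain ⟨ρ, hρ, hball⟩ := hKcompact.exists_forall_lipschitzOnWith_normalize hα hgrad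
    fun x hx => hgradLip x hx.1
  obtain ⟨m, hm⟩ := exists_nat_gt ((b - a) / α / (ρ / 2))
  obtain ⟨T, hT, γ, hγ0, hγ, hend⟩ := exists_isFlowLineIn_normalize_gradient hdiff hρ hball hx₀ m
  have hTle : T ≤ (b - a) / α := by
    have hgrowth := mul_sub_le_sub_of_normalize_gradient hT fun t ht =>
      ⟨hdiff _ (hγ t ht).1.1, hgrad _ (hγ t ht).1, (hγ t ht).2⟩
    rw [hγ0] at hgrowth
    rw [le_div_iff₀ hα]
    linarith [(hγ T ⟨hT, le_rfl⟩).1.2.2, hx₀.2.1]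
  refine ⟨T, ⟨hT, hTle⟩, γ, hγ0, fun t ht => (hγ t ht).1, fun t ht => (hγ t ht).2,
    hend.resolve_right fun hTm => ?_⟩
  rw [div_lt_iff₀ (half_pos hρ)] at hm
  linarith

theorem normalized_gradient_flow_reaches_level
    {n : ℕ} (U : Set (EuclideanSpace ℝ (Fin n))) (hU : IsOpen U)
    (v : EuclideanSpace ℝ (Fin n) → ℝ)
    (hdiff : ∀ x ∈ U, DifferentiableAt ℝ v x)
    (hgradLip : ∀ x ∈ U, ∃ (L : NNReal) (r : ℝ), 0 < r ∧ Metric.ball x r ⊆ U ∧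
      LipschitzOnWith L (fun y => gradient v y) (Metric.ball x r))
    (a b : ℝ) (hab : a < b)
    (hKcompact : IsCompact {x ∈ U | a ≤ v x ∧ v x ≤ b})
    (α : ℝ) (hα : 0 < α)
    (hgrad : ∀ x ∈ {x ∈ U | a ≤ v x ∧ v x ≤ b}, α ≤ ‖gradient v x‖) :
    ∀ x₀ ∈ {x ∈ U | a ≤ v x ∧ v x ≤ b},
      ∃ T : ℝ, T ∈ Set.Icc 0 ((b - a) / α) ∧
        ∃ γ : ℝ → EuclideanSpace ℝ (Fin n),
          γ 0 = x₀ ∧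
          (∀ t ∈ Set.Icc 0 T, γ t ∈ {x ∈ U | a ≤ v x ∧ v x ≤ b}) ∧
          (∀ t ∈ Set.Icc 0 T,
            HasDerivAt γ (‖gradient v (γ t)‖⁻¹ • gradient v (γ t)) t) ∧
          v (γ T) = b :=
  normalized_gradient_flow_reaches_level_general U v hdiff hgradLip a b hKcompact α hα hgrad
end

section
/- Let Ω ⊆ ℝⁿ be an open bounded convex set and let d(x) := dist(x, ∂Ω) denote the distance from the boundary. Let z ∈ Ω be a point with d(z) = max_{closure(Ω)} d, and let y ∈ ∂Ω satisfy |z − y| = d(z). Let δ > 0 and let u : closure(Ω) → ℝ be continuously differentiable on the set {x ∈ closure(Ω) : d(x) < δ}. Assume that u(x) ≤ d(x) for every x ∈ Ω and that u(x) = d(x) for every x on the open segment from y to z. Then |∇u(y)| = 1. -/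
/-!
Write `v = z - y` and `L` for the derivative of `u` at `y`. Since `y ∉ Ω` and `‖v‖ = d(z)`,
the distance function grows with unit slope along the segment from `y` to `z`, so
`u (y + t • v) = t ‖v‖` there; this forces `u y = 0` and `L v = ‖v‖`. On the other hand the
ball `B(z, ‖v‖)` lies in `Ω`, so for every `w` with `‖w - v‖ < ‖v‖` the ray `y + t • w` enters `Ω`,
where `u ≤ d ≤ dist(·, y) = t ‖w‖`; hence `L w ≤ ‖w‖` near `v`. A linear functional that
touches the norm from below at `v` and stays below it near `v` has norm one.
-/

open Set Metric Filter Topology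

section

variable {E : Type*} [NormedAddCommGroup E] [NormedSpace ℝ E]

section Ray

variable {s : Set E} {y w : E}

theorem tendsto_add_smul_nhdsGT_zero (y w : E) :
    Tendsto (fun t : ℝ => y + t • w) (𝓝[>] 0) (𝓝 y) :=
  (Continuous.tendsto' (by fun_prop) 0 y (by simp)).mono_left nhdsWithin_le_nhds

theorem eventually_nhdsGT_add_smul_mem_of_mem_nhds (hs : s ∈ 𝓝 y) :
    ∀ᶠ t in 𝓝[>] (0 : ℝ), y + t • w ∈ s :=
  tendsto_add_smul_nhdsGT_zero y w hs

theorem tendsto_add_smul_nhdsWithin (hs : ∀ᶠ t in 𝓝[>] (0 : ℝ), y + t • w ∈ s) :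
    Tendsto (fun t : ℝ => y + t • w) (𝓝[>] 0) (𝓝[s] y) :=
  tendsto_nhdsWithin_iff.2 ⟨tendsto_add_smul_nhdsGT_zero y w, hs⟩

variable {f : E → ℝ} {L : E →L[ℝ] ℝ}

theorem ContinuousWithinAt.eq_zero_of_eventually_add_smul_eq (hf : ContinuousWithinAt f s y)
    (hs : ∀ᶠ t in 𝓝[>] (0 : ℝ), y + t • w ∈ s) {b : ℝ}
    (hb : ∀ᶠ t in 𝓝[>] (0 : ℝ), f (y + t • w) = t * b) : f y = 0 := by
  have hlim : Tendsto (fun t : ℝ => t * b) (𝓝[>] 0) (𝓝 0) :=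
    (Continuous.tendsto' (by fun_prop) 0 0 (by simp)).mono_left nhdsWithin_le_nhds
  exact tendsto_nhds_unique (hf.tendsto.comp (tendsto_add_smul_nhdsWithin hs))
    (hlim.congr' (hb.mono fun _ h => h.symm))

theorem HasFDerivWithinAt.hasDerivWithinAt_add_smul (hf : HasFDerivWithinAt f L s y)
    (hs : ∀ᶠ t in 𝓝[>] (0 : ℝ), y + t • w ∈ s) :
    HasDerivWithinAt (fun t : ℝ => f (y + t • w)) (L w) (Ioi 0) 0 := by
  have hray : HasDerivAt (fun t : ℝ => y + t • w) w 0 := by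
    simpa using ((hasDerivAt_id (0 : ℝ)).smul_const w).const_add y
  have hf0 : HasFDerivWithinAt f L s (y + (0 : ℝ) • w) := by simpa using hf
  rw [← hasDerivWithinAt_inter' hs]
  exact hf0.comp_hasDerivWithinAt 0 hray.hasDerivWithinAt fun _ ht => ht.2

theorem HasFDerivWithinAt.apply_le_of_eventually_add_smul_le (hf : HasFDerivWithinAt f L s y)
    (hs : ∀ᶠ t in 𝓝[>] (0 : ℝ), y + t • w ∈ s) {b : ℝ}
    (hb : ∀ᶠ t in 𝓝[>] (0 : ℝ), f (y + t • w) ≤ f y + t * b) : L w ≤ b := by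
  have hslope := hasDerivWithinAt_iff_tendsto_slope.1 (hf.hasDerivWithinAt_add_smul hs)
  rw [sdiff_singleton_eq_self self_notMem_Ioi] at hslope
  refine le_of_tendsto hslope ?_
  filter_upwards [hb, self_mem_nhdsWithin] with t hbt (ht : 0 < t)
  rw [slope_def_field, zero_smul, add_zero, sub_zero, div_le_iff₀ ht]
  linarith

theorem HasFDerivWithinAt.apply_eq_of_eventually_add_smul_eq (hf : HasFDerivWithinAt f L s y)
    (hs : ∀ᶠ t in 𝓝[>] (0 : ℝ), y + t • w ∈ s) {b : ℝ}
    (hb : ∀ᶠ t in 𝓝[>] (0 : ℝ), f (y + t • w) = f y + t * b) : L w = b := by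
  refine le_antisymm (hf.apply_le_of_eventually_add_smul_le hs (hb.mono fun _ h => h.le)) ?_
  have := hf.neg.apply_le_of_eventually_add_smul_le hs (b := -b)
    (hb.mono fun _ h => by simp only [Pi.neg_apply, h, neg_add, mul_neg, le_refl])
  simpa using this

end Ray

theorem ContinuousLinearMap.norm_eq_one_of_apply_eq_norm {L : E →L[ℝ] ℝ} {v : E} (hv : v ≠ 0)
    (hLv : L v = ‖v‖) (hL : ∀ᶠ w in 𝓝 v, L w ≤ ‖w‖) : ‖L‖ = 1 := by
  have hle : ∀ w, L w ≤ ‖w‖ := by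
    intro w
    obtain ⟨t, htv, ht⟩ :=
      (((tendsto_add_smul_nhdsGT_zero v w).eventually hL).and self_mem_nhdsWithin).exists
    have htri := norm_add_le v (t • w)
    rw [map_add, map_smul, hLv, smul_eq_mul] at htv
    rw [norm_smul, Real.norm_of_nonneg (le_of_lt ht)] at htri
    nlinarith [show (0 : ℝ) < t from ht]
  refine le_antisymm (L.opNorm_le_bound zero_le_one fun w => ?_) ?_
  · rw [Real.norm_eq_abs, abs_le, one_mul]
    exact ⟨by linarith [hle (-w), norm_neg w, map_neg L w], hle w⟩
  · have := L.le_opNorm v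
    rw [hLv, norm_norm] at this
    exact (le_mul_iff_one_le_left (norm_pos_iff.2 hv)).1 this

section FootPoint

variable {s : Set E} {y z w : E} {t : ℝ}

theorem infDist_add_smul_le (hy : y ∈ s) (ht : 0 ≤ t) : infDist (y + t • w) s ≤ t * ‖w‖ := by
  have := infDist_le_dist_of_mem (x := y + t • w) hy
  rwa [dist_eq_norm, add_sub_cancel_left, norm_smul, Real.norm_of_nonneg ht] at this

theorem infDist_add_smul_sub_eq (hy : y ∈ s) (hyz : ‖z - y‖ = infDist z s) (ht : t ∈ Icc (0 : ℝ) 1) :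
    infDist (y + t • (z - y)) s = t * ‖z - y‖ := by
  refine le_antisymm (infDist_add_smul_le hy ht.1) ?_
  have hz := infDist_le_infDist_add_dist (s := s) (x := z) (y := y + t • (z - y))
  rw [dist_eq_norm, show z - (y + t • (z - y)) = (1 - t) • (z - y) by module, norm_smul,
    Real.norm_of_nonneg (sub_nonneg.2 ht.2)] at hz
  linarith

theorem add_smul_mem_ball {v : E} (ht : t ∈ Ioc (0 : ℝ) 1) (hw : ‖w - v‖ < ‖v‖) :
    y + t • w ∈ ball (y + v) ‖v‖ := by
  rw [mem_ball, dist_eq_norm]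
  calc ‖y + t • w - (y + v)‖ = ‖t • (w - v) - (1 - t) • v‖ := by congr 1; module
    _ ≤ ‖t • (w - v)‖ + ‖(1 - t) • v‖ := norm_sub_le _ _
    _ = t * ‖w - v‖ + (1 - t) * ‖v‖ := by
      rw [norm_smul, norm_smul, Real.norm_of_nonneg ht.1.le, Real.norm_of_nonneg (by linarith [ht.2])]
    _ < ‖v‖ := by nlinarith [ht.1]

theorem eventually_nhdsGT_add_smul_mem_of_norm_sub_lt (hyz : ‖z - y‖ = infDist z sᶜ)
    (hw : ‖w - (z - y)‖ < ‖z - y‖) : ∀ᶠ t in 𝓝[>] (0 : ℝ), y + t • w ∈ s := by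
  filter_upwards [Ioo_mem_nhdsGT one_pos] with t ht
  have hball := add_smul_mem_ball (y := y) ⟨ht.1, ht.2.le⟩ hw
  rw [add_sub_cancel, hyz] at hball
  exact ball_infDist_compl_subset hball

end FootPoint

end

theorem gradient_norm_one_at_foot_point_general
    {n : ℕ} (Ω : Set (EuclideanSpace ℝ (Fin n)))
    (hΩopen : IsOpen Ω)
    (z : EuclideanSpace ℝ (Fin n)) (hz : z ∈ Ω)
    (y : EuclideanSpace ℝ (Fin n)) (hy : y ∈ frontier Ω)
    (hyz : ‖z - y‖ = Metric.infDist z Ωᶜ)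
    (δ : ℝ) (hδ : 0 < δ)
    (u : EuclideanSpace ℝ (Fin n) → ℝ)
    (huC1 : ContDiffOn ℝ 1 u {x ∈ closure Ω | Metric.infDist x Ωᶜ < δ})
    (hle : ∀ x ∈ Ω, u x ≤ Metric.infDist x Ωᶜ)
    (heq : ∀ x ∈ openSegment ℝ y z, u x = Metric.infDist x Ωᶜ) :
    ‖fderivWithin ℝ u {x ∈ closure Ω | Metric.infDist x Ωᶜ < δ} y‖ = 1 := by
  set S := {x ∈ closure Ω | infDist x Ωᶜ < δ}
  set v := z - y
  have hyΩ : y ∈ Ωᶜ := (hΩopen.frontier_eq ▸ hy).2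
  have hv : v ≠ 0 := sub_ne_zero.2 fun h => hyΩ (h ▸ hz)
  have hL : HasFDerivWithinAt u (fderivWithin ℝ u S y) S y :=
    (huC1.differentiableOn one_ne_zero y
      ⟨frontier_subset_closure hy, by rwa [infDist_zero_of_mem hyΩ]⟩).hasFDerivWithinAt
  have hnear : {x | infDist x Ωᶜ < δ} ∈ 𝓝 y :=
    (isOpen_lt (continuous_infDist_pt _) continuous_const).mem_nhds
      (show infDist y Ωᶜ < δ by rwa [infDist_zero_of_mem hyΩ])
  have hS : ∀ w, (∀ᶠ t in 𝓝[>] (0 : ℝ), y + t • w ∈ Ω) → ∀ᶠ t in 𝓝[>] (0 : ℝ), y + t • w ∈ S :=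
    fun w hw => (hw.and (eventually_nhdsGT_add_smul_mem_of_mem_nhds hnear)).mono
      fun _ h => ⟨subset_closure h.1, h.2⟩
  have hcone : ∀ w ∈ ball v ‖v‖, ∀ᶠ t in 𝓝[>] (0 : ℝ), y + t • w ∈ Ω := fun w hw =>
    eventually_nhdsGT_add_smul_mem_of_norm_sub_lt hyz (by rwa [mem_ball, dist_eq_norm] at hw)
  have hvS := hS v (hcone v (mem_ball_self (norm_pos_iff.2 hv)))
  have hseg : ∀ᶠ t in 𝓝[>] (0 : ℝ), u (y + t • v) = t * ‖v‖ := by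
    filter_upwards [Ioo_mem_nhdsGT one_pos] with t ht
    have hx : y + t • v ∈ openSegment ℝ y z := (openSegment_eq_image' ℝ y z).symm ▸ ⟨t, ht, rfl⟩
    rw [heq _ hx, infDist_add_smul_sub_eq hyΩ hyz (Ioo_subset_Icc_self ht)]
  have hu0 : u y = 0 := hL.continuousWithinAt.eq_zero_of_eventually_add_smul_eq hvS hseg
  refine ContinuousLinearMap.norm_eq_one_of_apply_eq_norm hv
    (hL.apply_eq_of_eventually_add_smul_eq hvS (by simpa [hu0] using hseg)) ?_
  filter_upwards [ball_mem_nhds v (norm_pos_iff.2 hv)] with w hw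
  refine hL.apply_le_of_eventually_add_smul_le (hS w (hcone w hw)) ?_
  filter_upwards [hcone w hw, self_mem_nhdsWithin] with t ht (htpos : 0 < t)
  rw [hu0, zero_add]
  exact (hle _ ht).trans (infDist_add_smul_le hyΩ htpos.le)

theorem gradient_norm_one_at_foot_point
    {n : ℕ} (Ω : Set (EuclideanSpace ℝ (Fin n)))
    (hΩopen : IsOpen Ω) (hΩbdd : Bornology.IsBounded Ω) (hΩconv : Convex ℝ Ω)
    (z : EuclideanSpace ℝ (Fin n)) (hz : z ∈ Ω)
    (hzmax : ∀ x ∈ closure Ω, Metric.infDist x Ωᶜ ≤ Metric.infDist z Ωᶜ)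
    (y : EuclideanSpace ℝ (Fin n)) (hy : y ∈ frontier Ω)
    (hyz : ‖z - y‖ = Metric.infDist z Ωᶜ)
    (δ : ℝ) (hδ : 0 < δ)
    (u : EuclideanSpace ℝ (Fin n) → ℝ)
    (huC1 : ContDiffOn ℝ 1 u {x ∈ closure Ω | Metric.infDist x Ωᶜ < δ})
    (hle : ∀ x ∈ Ω, u x ≤ Metric.infDist x Ωᶜ)
    (heq : ∀ x ∈ openSegment ℝ y z, u x = Metric.infDist x Ωᶜ) :
    ‖fderivWithin ℝ u {x ∈ closure Ω | Metric.infDist x Ωᶜ < δ} y‖ = 1 :=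
  gradient_norm_one_at_foot_point_general Ω hΩopen z hz y hy hyz δ hδ u huC1 hle heq
end

section
/- Let Ω ⊆ ℝⁿ be an open bounded set and let u : closure(Ω) → ℝ be a continuous function with u = 0 on ∂Ω, which is locally semiconcave in Ω and satisfies |∇u(x)| ≥ 1 at almost every point x ∈ Ω (note that u, being locally semiconcave, is locally Lipschitz and hence differentiable almost everywhere in Ω). Then u(x) ≥ dist(x, ∂Ω) for every x ∈ Ω. -/
/-!
Fix `x ∈ Ω` and `ρ < 1`, and minimise `u + ρ · dist(·, x)` over the compact set `closure Ω`.
The minimiser `z` cannot lie in `Ω`: near an interior point `y`, semiconcavity makes `u` a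
concave function plus a quadratic, hence locally Lipschitz, so by Rademacher's theorem there are
points `z'` arbitrarily close to `y` where `u` is differentiable with `|∇u(z')| ≥ 1`; there the
one-sided Taylor bound `u(z' + v) ≤ u(z') + ⟪∇u(z'), v⟫ + C|v|²/2` shows that a short step of
length `s` against the gradient lowers `u` by about `s > ρ s`. So `z ∈ ∂Ω`, `u(z) = 0`, and
`ρ · dist(x, ∂Ω) ≤ ρ |z - x| ≤ u(x)`; let `ρ → 1`.
-/

open Set Metric MeasureTheory

open Filter Topology
open scoped RealInnerProductSpace

theorem LocallyLipschitzOn.ae_differentiableAt {E F : Type*} [NormedAddCommGroup E]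
    [NormedSpace ℝ E] [FiniteDimensional ℝ E] [MeasurableSpace E] [BorelSpace E]
    [NormedAddCommGroup F] [NormedSpace ℝ F] [FiniteDimensional ℝ F]
    {μ : Measure E} [μ.IsAddHaarMeasure] {s : Set E} {f : E → F}
    (hf : LocallyLipschitzOn s f) (hs : IsOpen s) :
    ∀ᵐ x ∂μ, x ∈ s → DifferentiableAt ℝ f x := by
  rw [ae_iff]
  refine measure_null_of_locally_null _ fun x hx => ?_
  obtain ⟨K, t, ht, hK⟩ := hf (of_not_imp hx)
  rw [hs.nhdsWithin_eq (of_not_imp hx)] at ht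
  refine ⟨_ ∩ interior t, inter_mem_nhdsWithin _ (interior_mem_nhds.2 ht), ?_⟩
  refine measure_mono_null ?_
    (ae_iff.1 ((hK.mono interior_subset).ae_differentiableWithinAt_of_mem (μ := μ)))
  intro z hz hdiff
  exact hz.1 fun _ => (hdiff hz.2).differentiableAt (isOpen_interior.mem_nhds hz.2)

theorem IsOpen.subset_closure_of_ae {X : Type*} [TopologicalSpace X] [MeasurableSpace X]
    {μ : Measure X} [μ.IsOpenPosMeasure] {U : Set X} {p : X → Prop} (hU : IsOpen U)
    (hp : ∀ᵐ x ∂μ, x ∈ U → p x) : U ⊆ closure {x | p x} := by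
  intro y hy
  refine mem_closure_iff_nhds.2 fun t ht => ?_
  by_contra h
  have hnull : μ (t ∩ U) = 0 :=
    measure_mono_null (fun x hx (hpx : x ∈ U → p x) => h ⟨x, hx.1, hpx hx.2⟩) (ae_iff.1 hp)
  exact (μ.measure_pos_of_mem_nhds (inter_mem ht (hU.mem_nhds hy))).ne' hnull

theorem exists_mem_frontier_add_mul_dist_le {X : Type*} [PseudoMetricSpace X] {Ω : Set X}
    {u : X → ℝ} {ρ : ℝ} (hΩ : IsOpen Ω) (hc : IsCompact (closure Ω))
    (hu : ContinuousOn u (closure Ω)) (hρ : 0 ≤ ρ)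
    (hdesc : ∀ y ∈ Ω, ∃ w ∈ Ω, u w + ρ * dist w y < u y) {x : X} (hx : x ∈ closure Ω) :
    ∃ z ∈ frontier Ω, u z + ρ * dist z x ≤ u x := by
  obtain ⟨z, hz, hmin⟩ := hc.exists_isMinOn ⟨x, hx⟩
    (hu.add (continuous_const.mul (continuous_id.dist continuous_const)).continuousOn)
  have hzΩ : z ∉ Ω := by
    intro hzΩ
    obtain ⟨w, hw, hlt⟩ := hdesc z hzΩ
    have hzw : u z + ρ * dist z x ≤ u w + ρ * dist w x := hmin (subset_closure hw)
    nlinarith [dist_triangle w z x]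
  refine ⟨z, ?_, by simpa using hmin hx⟩
  rw [frontier, hΩ.interior_eq]
  exact ⟨hz, hzΩ⟩

/-- `LocallySemiconcaveOn Ω u` unfolds to: for every compact `K ⊆ Ω` there is `C ≥ 0` with
`SemiconcaveOnWith C K u`. -/
def SemiconcaveOnWith {E : Type*} [NormedAddCommGroup E] [NormedSpace ℝ E] (C : ℝ) (K : Set E)
    (u : E → ℝ) : Prop :=
  ∀ x y : E, segment ℝ x y ⊆ K → ∀ l ∈ Icc (0:ℝ) 1,
    l * u x + (1 - l) * u y - C * (l * (1 - l)) / 2 * ‖x - y‖ ^ 2 ≤ u (l • x + (1 - l) • y)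

section NormedSpace

variable {E : Type*} [NormedAddCommGroup E] [NormedSpace ℝ E] {C : ℝ} {K : Set E} {u : E → ℝ}

theorem SemiconcaveOnWith.mono {K' : Set E} (hsc : SemiconcaveOnWith C K u) (h : K' ⊆ K) :
    SemiconcaveOnWith C K' u :=
  fun x y hxy => hsc x y (hxy.trans h)

theorem SemiconcaveOnWith.le_add_of_hasFDerivAt (hsc : SemiconcaveOnWith C K u) (hC : 0 ≤ C)
    {z v : E} (hseg : segment ℝ (z + v) z ⊆ K) {f : E →L[ℝ] ℝ} (hf : HasFDerivAt u f z) :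
    u (z + v) ≤ u z + f v + C / 2 * ‖v‖ ^ 2 := by
  have hline : HasDerivAt (fun l : ℝ => u (z + l • v)) (f v) 0 := by
    have hl : HasDerivAt (fun l : ℝ => z + l • v) v 0 := by
      simpa using ((hasDerivAt_id (0:ℝ)).smul_const v).const_add z
    exact (by simpa using hf : HasFDerivAt u f (z + (0:ℝ) • v)).comp_hasDerivAt 0 hl
  have hslope := (hasDerivAt_iff_tendsto_slope.mp hline).mono_left (nhdsGT_le_nhdsNE 0)
  have hev : ∀ᶠ l in 𝓝[>] (0:ℝ),
      u (z + v) - u z - C / 2 * ‖v‖ ^ 2 ≤ slope (fun l : ℝ => u (z + l • v)) 0 l := by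
    filter_upwards [Ioc_mem_nhdsGT one_pos] with l ⟨hl0, hl1⟩
    have h := hsc (z + v) z hseg l ⟨hl0.le, hl1⟩
    rw [show l • (z + v) + (1 - l) • z = z + l • v by module, add_sub_cancel_left] at h
    rw [slope_def_field, zero_smul, add_zero, sub_zero, le_div_iff₀ hl0]
    nlinarith [mul_nonneg hC (mul_nonneg (sq_nonneg l) (sq_nonneg ‖v‖))]
  linarith [ge_of_tendsto hslope hev]

end NormedSpace

section InnerProductSpace

variable {E : Type*} [NormedAddCommGroup E] [InnerProductSpace ℝ E] {C : ℝ} {K : Set E}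
  {u : E → ℝ}

theorem SemiconcaveOnWith.concaveOn_sub_sq (hsc : SemiconcaveOnWith C K u) (hK : Convex ℝ K) :
    ConcaveOn ℝ K (fun w => u w - C / 2 * ‖w‖ ^ 2) := by
  refine ⟨hK, fun p hp q hq a b ha hb hab => ?_⟩
  obtain rfl : b = 1 - a := by linarith
  have h := hsc p q (hK.segment_subset hp hq) a ⟨ha, by linarith⟩
  have hnorm : ‖a • p + (1 - a) • q‖ ^ 2
      = a * ‖p‖ ^ 2 + (1 - a) * ‖q‖ ^ 2 - a * (1 - a) * ‖p - q‖ ^ 2 := by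
    rw [norm_add_sq_real, norm_sub_sq_real, norm_smul, norm_smul, real_inner_smul_left,
      real_inner_smul_right, Real.norm_eq_abs, Real.norm_eq_abs, mul_pow, mul_pow, sq_abs, sq_abs]
    ring
  simp only [smul_eq_mul]
  rw [hnorm]
  linarith

theorem SemiconcaveOnWith.exists_le_sub_mul_norm_gradient [CompleteSpace E]
    (hsc : SemiconcaveOnWith C K u) (hC : 0 ≤ C) {z : E} {s : ℝ} (hs : 0 ≤ s)
    (hK : closedBall z s ⊆ K) (hd : DifferentiableAt ℝ u z) :
    ∃ w ∈ closedBall z s, u w ≤ u z - s * ‖gradient u z‖ + C / 2 * s ^ 2 := by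
  set g := gradient u z
  rcases eq_or_ne g 0 with hg | hg
  · refine ⟨z, mem_closedBall_self hs, ?_⟩
    rw [hg, norm_zero]
    nlinarith [mul_nonneg hC (sq_nonneg s)]
  set v := -(s / ‖g‖) • g
  have hv : ‖v‖ = s := by
    rw [norm_smul, norm_neg, norm_div, norm_norm, Real.norm_of_nonneg hs,
      div_mul_cancel₀ _ (norm_ne_zero_iff.2 hg)]
  have hgv : ⟪g, v⟫ = -(s * ‖g‖) := by
    rw [real_inner_smul_right, real_inner_self_eq_norm_sq]
    field_simp
  have hzv : z + v ∈ closedBall z s := by simp [hv]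
  refine ⟨z + v, hzv, ?_⟩
  have h := hsc.le_add_of_hasFDerivAt hC
    (((convex_closedBall z s).segment_subset hzv (mem_closedBall_self hs)).trans hK)
    (hasGradientAt_iff_hasFDerivAt.1 hd.hasGradientAt)
  rw [InnerProductSpace.toDual_apply_apply, hgv, hv] at h
  linarith

theorem SemiconcaveOnWith.exists_add_mul_dist_lt [CompleteSpace E] {r ρ : ℝ} {y : E}
    (hsc : SemiconcaveOnWith C (closedBall y r) u) (hC : 0 ≤ C) (hr : 0 < r)
    (hcont : ContinuousAt u y)
    (hy : y ∈ closure {z | DifferentiableAt ℝ u z ∧ 1 ≤ ‖gradient u z‖})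
    (hρ0 : 0 ≤ ρ) (hρ1 : ρ < 1) :
    ∃ w ∈ closedBall y r, u w + ρ * dist w y < u y := by
  obtain ⟨s, hs0, hsr, hCs⟩ : ∃ s, 0 < s ∧ s ≤ r / 2 ∧ C * s ≤ 1 - ρ := by
    refine ⟨min (r / 2) ((1 - ρ) / (C + 1)),
      lt_min (by positivity) (div_pos (by linarith) (by linarith)), min_le_left _ _, ?_⟩
    calc C * min (r / 2) ((1 - ρ) / (C + 1)) ≤ (C + 1) * ((1 - ρ) / (C + 1)) := by
          gcongr
          · linarith
          · exact min_le_right _ _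
      _ = 1 - ρ := mul_div_cancel₀ _ (by positivity)
  have hgain : 0 < (1 - ρ) * s := mul_pos (by linarith) hs0
  -- The step of length `s` from `z` lowers `u` by `s`, beating `ρ s` by `(1 - ρ) s`; the quadratic
  -- term costs at most half of this, and `u z - u y` and `dist z y` at most a quarter each.
  have hnear : ∀ᶠ z in 𝓝 y, u z < u y + (1 - ρ) * s / 4 ∧ dist z y < (1 - ρ) * s / 4 :=
    (hcont.eventually (gt_mem_nhds (by linarith))).and (ball_mem_nhds y (by positivity))
  obtain ⟨z, ⟨hzd, hzg⟩, huz, hzy⟩ :=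
    ((mem_closure_iff_frequently.1 hy).and_eventually hnear).exists
  obtain ⟨w, hwz, huw⟩ := hsc.exists_le_sub_mul_norm_gradient hC hs0.le
    (closedBall_subset_closedBall' (by nlinarith)) hzd
  refine ⟨w, closedBall_subset_closedBall' (by nlinarith) hwz, ?_⟩
  have hwy : dist w y ≤ s + (1 - ρ) * s / 4 :=
    (dist_triangle w z y).trans (add_le_add hwz hzy.le)
  nlinarith [mul_le_mul_of_nonneg_left hwy hρ0, mul_le_mul_of_nonneg_left hzg hs0.le,
    mul_le_mul_of_nonneg_right hCs hs0.le]

end InnerProductSpace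

section LocallySemiconcaveOn

variable {n : ℕ} {Ω : Set (EuclideanSpace ℝ (Fin n))} {u : EuclideanSpace ℝ (Fin n) → ℝ}

theorem LocallySemiconcaveOn.locallyLipschitzOn (hΩ : IsOpen Ω)
    (hsc : LocallySemiconcaveOn Ω u) : LocallyLipschitzOn Ω u := by
  intro x hx
  obtain ⟨r, hr, hxr⟩ := nhds_basis_closedBall.mem_iff.1 (hΩ.mem_nhds hx)
  obtain ⟨C, -, hC⟩ := hsc _ hxr (isCompact_closedBall x r)
  have hconc :=
    (SemiconcaveOnWith.mono hC ball_subset_closedBall).concaveOn_sub_sq (convex_ball x r)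
  have hquad :
      LocallyLipschitzOn (ball x r) fun w : EuclideanSpace ℝ (Fin n) => C / 2 * ‖w‖ ^ 2 :=
    ((contDiff_norm_sq ℝ).const_smul (C / 2)).locallyLipschitz.locallyLipschitzOn
  obtain ⟨K, t, ht, hK⟩ := (hconc.locallyLipschitzOn isOpen_ball).add hquad (mem_ball_self hr)
  rw [isOpen_ball.nhdsWithin_eq (mem_ball_self hr)] at ht
  exact ⟨K, t, mem_nhdsWithin_of_mem_nhds ht, by simpa using hK⟩

theorem LocallySemiconcaveOn.exists_add_mul_dist_lt (hΩ : IsOpen Ω)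
    (hsc : LocallySemiconcaveOn Ω u) {y : EuclideanSpace ℝ (Fin n)} (hy : y ∈ Ω)
    (hgood : y ∈ closure {z | DifferentiableAt ℝ u z ∧ 1 ≤ ‖gradient u z‖})
    {ρ : ℝ} (hρ0 : 0 ≤ ρ) (hρ1 : ρ < 1) :
    ∃ w ∈ Ω, u w + ρ * dist w y < u y := by
  obtain ⟨r, hr, hyr⟩ := nhds_basis_closedBall.mem_iff.1 (hΩ.mem_nhds hy)
  obtain ⟨C, hC, hCr⟩ := hsc _ hyr (isCompact_closedBall y r)
  obtain ⟨w, hw, hlt⟩ := SemiconcaveOnWith.exists_add_mul_dist_lt hCr hC hr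
    ((hsc.locallyLipschitzOn hΩ).continuousOn.continuousAt (hΩ.mem_nhds hy)) hgood hρ0 hρ1
  exact ⟨w, hyr hw, hlt⟩

end LocallySemiconcaveOn

theorem eikonal_supersolution_comparison
    {n : ℕ} (Ω : Set (EuclideanSpace ℝ (Fin n)))
    (hΩopen : IsOpen Ω) (hΩbdd : Bornology.IsBounded Ω)
    (u : EuclideanSpace ℝ (Fin n) → ℝ)
    (hu : ContinuousOn u (closure Ω))
    (hu0 : ∀ x ∈ frontier Ω, u x = 0)
    (hsc : LocallySemiconcaveOn Ω u)
    (hgrad : ∀ᵐ x ∂(volume : Measure (EuclideanSpace ℝ (Fin n))),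
      x ∈ Ω → DifferentiableAt ℝ u x → 1 ≤ ‖gradient u x‖) :
    ∀ x ∈ Ω, Metric.infDist x (frontier Ω) ≤ u x := by
  intro x hx
  have hgood : Ω ⊆ closure {z | DifferentiableAt ℝ u z ∧ 1 ≤ ‖gradient u z‖} := by
    refine hΩopen.subset_closure_of_ae (μ := volume) ?_
    filter_upwards [(hsc.locallyLipschitzOn hΩopen).ae_differentiableAt hΩopen, hgrad]
      with z hdiff hnorm hz using ⟨hdiff hz, hnorm hz (hdiff hz)⟩
  have hlim : Tendsto (fun ρ : ℝ => ρ * infDist x (frontier Ω)) (𝓝[<] 1)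
      (𝓝 (infDist x (frontier Ω))) := by
    simpa using ((continuous_mul_const (infDist x (frontier Ω))).tendsto 1).mono_left
      nhdsWithin_le_nhds
  refine le_of_tendsto hlim ?_
  filter_upwards [Ioo_mem_nhdsLT zero_lt_one] with ρ ⟨hρ0, hρ1⟩
  obtain ⟨z, hz, hzx⟩ := exists_mem_frontier_add_mul_dist_le hΩopen hΩbdd.isCompact_closure hu
    hρ0.le (fun y hy => hsc.exists_add_mul_dist_lt hΩopen hy (hgood hy) hρ0.le hρ1)
    (subset_closure hx)
  rw [hu0 z hz, zero_add, dist_comm] at hzx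
  exact (mul_le_mul_of_nonneg_left (infDist_le_dist_of_mem hz) hρ0.le).trans hzx
end

section
/- Let Ω ⊆ ℝⁿ be an open bounded set and let u : closure(Ω) → ℝ be a continuous function with u = 0 on ∂Ω, which is locally semiconcave in Ω and satisfies |∇u(x)| = 1 at almost every point x ∈ Ω (note that u, being locally semiconcave, is locally Lipschitz and hence differentiable almost everywhere in Ω). Then u(x) = dist(x, ∂Ω) for every x ∈ Ω. -/
/-!
Semiconcavity gives, at every point, a supergradient of norm one: it is a limit of gradients at
nearby points of differentiability, which exist by Rademacher's theorem since `u` minus a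
quadratic is concave. Testing the supergradient inequality against `‖p‖ = 1` shows that `u` is
`1`-Lipschitz along segments of `Ω`, and since `u = 0` on `∂Ω` this gives `|u| ≤ dist(·, ∂Ω)`.

Conversely, a step of length `h` against the supergradient lowers `u` by `h - C h² / 2`; since
`u` is bounded, iterating such steps reaches any neighbourhood of `∂Ω`, and comparing the
distance travelled with the decrease of `u` gives `dist(·, ∂Ω) ≤ u`.
-/

open Set Metric MeasureTheory Filter
open scoped RealInnerProductSpace Topology

theorem exists_mem_diff_of_forall_descent {X : Type*} [PseudoMetricSpace X] {S G : Set X}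
    {f : X → ℝ} {h c B : ℝ} (hc : 0 < c) (hB : ∀ y ∈ S, B ≤ f y)
    (hstep : ∀ y ∈ S ∩ G, ∃ y' ∈ S, dist y' y ≤ h ∧ f y' ≤ f y - c) {x : X}
    (hx : x ∈ S) :
    ∃ y ∈ S \ G, ∃ k : ℕ, dist y x ≤ k * h ∧ f y ≤ f x - k * c := by
  by_contra! hexit
  have hchain : ∀ k : ℕ, ∃ y ∈ S, dist y x ≤ k * h ∧ f y ≤ f x - k * c := by
    intro k
    induction k with
    | zero => exact ⟨x, hx, by simp, by simp⟩
    | succ k ih =>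
      obtain ⟨y, hyS, hyx, hfy⟩ := ih
      have hyG : y ∈ G := by
        by_contra hyG
        exact (hexit y ⟨hyS, hyG⟩ k hyx).not_ge hfy
      obtain ⟨y', hy'S, hy'y, hfy'⟩ := hstep y ⟨hyS, hyG⟩
      refine ⟨y', hy'S, ?_, ?_⟩ <;> push_cast
      · linarith [dist_triangle y' y x]
      · linarith
  obtain ⟨k, hk⟩ := exists_nat_gt ((f x - B) / c)
  obtain ⟨y, hyS, -, hfy⟩ := hchain k
  rw [div_lt_iff₀ hc] at hk
  linarith [hB y hyS]

theorem mem_closure_setOf_of_ae {X : Type*} [TopologicalSpace X] [MeasurableSpace X]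
    {μ : Measure X} [μ.IsOpenPosMeasure] {p : X → Prop} {U : Set X} {x : X} (hU : U ∈ 𝓝 x)
    (h : ∀ᵐ y ∂μ, y ∈ U → p y) : x ∈ closure {y | p y} :=
  closure_mono (fun _ hy ↦ hy.2 (interior_subset hy.1))
    ((Measure.dense_of_ae h).open_subset_closure_inter isOpen_interior
      (mem_interior_iff_mem_nhds.2 hU))

section Normed

variable {E : Type*} [NormedAddCommGroup E] [NormedSpace ℝ E]

theorem ConcaveOn.le_add_of_hasFDerivAt {s : Set E} {f : E → ℝ}
    {f' : E →L[ℝ] ℝ} {x y : E} (hf : ConcaveOn ℝ s f) (hx : x ∈ s) (hy : y ∈ s)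
    (hf' : HasFDerivAt f f' x) : f y ≤ f x + f' (y - x) := by
  set γ : ℝ →ᵃ[ℝ] E := AffineMap.lineMap x y
  have hγ0 : γ 0 = x := AffineMap.lineMap_apply_zero x y
  have hγ1 : γ 1 = y := AffineMap.lineMap_apply_one x y
  have hderiv : HasDerivAt (f ∘ γ) (f' (y - x)) 0 :=
    hf'.comp_hasDerivAt_of_eq 0 AffineMap.hasDerivAt_lineMap hγ0.symm
  have := (hf.comp_affineMap γ).slope_le_of_hasDerivAt (x := 0) (y := 1)
    (by simpa [hγ0] using hx) (by simpa [hγ1] using hy) one_pos hderiv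
  rw [slope_def_field, Function.comp_apply, Function.comp_apply, hγ0, hγ1] at this
  linarith

theorem le_add_norm_sub_of_forall_eventually_le {u : E → ℝ} {a b : E}
    (hu : ContinuousOn u (segment ℝ a b))
    (hloc : ∀ x ∈ segment ℝ a b,
      ∃ C, ∀ᶠ y in 𝓝 x, u y ≤ u x + ‖y - x‖ + C * ‖y - x‖ ^ 2) :
    u b ≤ u a + ‖b - a‖ := by
  set γ : ℝ →ᵃ[ℝ] E := AffineMap.lineMap a b
  have hγ : MapsTo γ (Icc 0 1) (segment ℝ a b) := by
    rw [segment_eq_image_lineMap]; exact mapsTo_image _ _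
  have hγsub : ∀ s t : ℝ, γ s - γ t = (s - t) • (b - a) := fun s t ↦ by
    simp only [γ, AffineMap.lineMap_apply_module', sub_smul]; abel
  have key := image_le_of_liminf_slope_right_le_deriv_boundary (f := u ∘ γ)
    (B := fun t ↦ u a + t * ‖b - a‖) (B' := fun _ ↦ ‖b - a‖)
    (hu.comp AffineMap.lineMap_continuous.continuousOn hγ) (by simp [γ]) (by fun_prop)
    (fun t _ ↦ ((hasDerivAt_mul_const _).const_add _).hasDerivWithinAt) ?_
    (right_mem_Icc.2 zero_le_one)
  · simpa [γ] using key
  intro t ht r hr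
  obtain ⟨C, hC⟩ := hloc (γ t) (hγ (Ico_subset_Icc_self ht))
  have hγt : Tendsto γ (𝓝[>] t) (𝓝 (γ t)) :=
    (AffineMap.lineMap_continuous.tendsto t).mono_left nhdsWithin_le_nhds
  have hlim : Tendsto (fun s ↦ ‖b - a‖ + C * (s - t) * ‖b - a‖ ^ 2) (𝓝[>] t) (𝓝 ‖b - a‖) := by
    have : Continuous (fun s ↦ ‖b - a‖ + C * (s - t) * ‖b - a‖ ^ 2) := by fun_prop
    simpa using (this.tendsto t).mono_left nhdsWithin_le_nhds
  refine Eventually.frequently ?_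
  filter_upwards [hγt.eventually hC, hlim.eventually (gt_mem_nhds hr), self_mem_nhdsWithin]
    with s hs hsr (hts : t < s)
  have hnorm : ‖γ s - γ t‖ = (s - t) * ‖b - a‖ := by
    rw [hγsub, norm_smul, Real.norm_of_nonneg (sub_pos.2 hts).le]
  rw [hnorm] at hs
  rw [slope_def_field, Function.comp_apply, Function.comp_apply, div_lt_iff₀ (sub_pos.2 hts)]
  nlinarith [sub_pos.2 hts]

variable [FiniteDimensional ℝ E]

theorem LocallyLipschitzOn.exists_mem_nhds_ae_differentiableAt [MeasurableSpace E] [BorelSpace E]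
    (μ : Measure E) [μ.IsAddHaarMeasure] {s : Set E} {f : E → ℝ} {x : E}
    (hf : LocallyLipschitzOn s f) (hs : IsOpen s) (hx : x ∈ s) :
    ∃ U ∈ 𝓝 x, ∀ᵐ y ∂μ, y ∈ U → DifferentiableAt ℝ f y := by
  obtain ⟨K, t, ht, hK⟩ := hf hx
  rw [hs.nhdsWithin_eq hx] at ht
  refine ⟨interior t, interior_mem_nhds.2 ht, ?_⟩
  filter_upwards [hK.ae_differentiableWithinAt_of_mem (μ := μ)] with y hy hyt
  exact (hy (interior_subset hyt)).differentiableAt (mem_interior_iff_mem_nhds.1 hyt)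

theorem IsOpen.infDist_frontier_eq_infDist_compl {Ω : Set E} (hΩ : IsOpen Ω) {x : E}
    (hx : x ∈ Ω) : infDist x (frontier Ω) = infDist x Ωᶜ := by
  rcases eq_or_ne Ω univ with rfl | hne
  · simp
  obtain ⟨y, hy, hxy⟩ := exists_mem_frontier_infDist_compl_eq_dist hx hne
  refine le_antisymm (hxy ▸ infDist_le_dist_of_mem hy) ?_
  exact infDist_le_infDist_of_subset (fun z hz ↦ (hΩ.frontier_eq ▸ hz).2) ⟨y, hy⟩

theorem IsOpen.ball_infDist_frontier_subset {Ω : Set E} (hΩ : IsOpen Ω) {x : E}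
    (hx : x ∈ Ω) : ball x (infDist x (frontier Ω)) ⊆ Ω :=
  hΩ.infDist_frontier_eq_infDist_compl hx ▸ ball_infDist_compl_subset

theorem abs_le_infDist_frontier {Ω : Set E} {u : E → ℝ} (hΩ : IsOpen Ω) (hne : Ω ≠ univ)
    (hu : ContinuousOn u (closure Ω)) (hu0 : ∀ z ∈ frontier Ω, u z = 0)
    (hlip : ∀ a b, segment ℝ a b ⊆ Ω → |u b - u a| ≤ ‖b - a‖) {y : E}
    (hy : y ∈ Ω) :
    |u y| ≤ infDist y (frontier Ω) := by
  obtain ⟨z, hz, hyz⟩ := exists_mem_frontier_infDist_compl_eq_dist hy hne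
  have hball : ball y (dist y z) ⊆ Ω := hyz ▸ ball_infDist_compl_subset
  have hyz_pos : 0 < dist y z := dist_pos.2 fun h ↦ (hΩ.frontier_eq ▸ hz).2 (h ▸ hy)
  have hzcl : z ∈ closure (ball y (dist y z)) := by
    rw [closure_ball y hyz_pos.ne']; exact mem_closedBall.2 (dist_comm z y).le
  have hcont : ContinuousWithinAt u (ball y (dist y z)) z :=
    (hu z (frontier_subset_closure hz)).mono (hball.trans subset_closure)
  have := ContinuousWithinAt.closure_le (f := fun w ↦ |u w - u y|) (g := fun w ↦ ‖w - y‖)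
    hzcl (hcont.sub continuousWithinAt_const).abs (by fun_prop) fun w hw ↦
      hlip y w (((convex_ball y _).segment_subset (mem_ball_self hyz_pos) hw).trans hball)
  rw [hΩ.infDist_frontier_eq_infDist_compl hy, hyz, dist_comm, dist_eq_norm]
  rwa [hu0 z hz, zero_sub, abs_neg] at this

end Normed

section InnerProduct

variable {E : Type*} [NormedAddCommGroup E] [InnerProductSpace ℝ E]

theorem StrongConcaveOn.le_add_of_hasFDerivAt {s : Set E} {m : ℝ} {f : E → ℝ}
    {f' : E →L[ℝ] ℝ} {x y : E} (hf : StrongConcaveOn s m f) (hx : x ∈ s)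
    (hy : y ∈ s) (hf' : HasFDerivAt f f' x) :
    f y ≤ f x + f' (y - x) - m / 2 * ‖y - x‖ ^ 2 := by
  have hsq := (hasStrictFDerivAt_norm_sq x).hasFDerivAt.const_mul (m / 2)
  have := (strongConcaveOn_iff_convex.1 hf).le_add_of_hasFDerivAt hx hy (hf'.add hsq)
  simp only [add_apply, smul_apply, coe_innerSL_apply, nsmul_eq_mul, Nat.cast_ofNat,
    smul_eq_mul] at this
  have hexp : ‖y - x‖ ^ 2 = ‖y‖ ^ 2 - 2 * ⟪x, y - x⟫ - ‖x‖ ^ 2 := by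
    rw [norm_sub_sq_real, inner_sub_right, real_inner_self_eq_norm_sq, real_inner_comm]; ring
  rw [hexp]
  linarith

variable [FiniteDimensional ℝ E]

theorem StrongConcaveOn.locallyLipschitzOn_interior {s : Set E} {m : ℝ} {f : E → ℝ}
    (hf : StrongConcaveOn s m f) : LocallyLipschitzOn (interior s) f := by
  have hsq : LocallyLipschitzOn (interior s) fun x : E ↦ m / 2 * ‖x‖ ^ 2 :=
    (contDiff_const.mul (contDiff_norm_sq ℝ)).locallyLipschitz.locallyLipschitzOn
  simpa using (strongConcaveOn_iff_convex.1 hf).locallyLipschitzOn_interior.sub hsq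

theorem StrongConcaveOn.exists_unit_supergradient [MeasurableSpace E] [BorelSpace E]
    {μ : Measure E} [μ.IsAddHaarMeasure] {u : E → ℝ} {z : E} {ρ m : ℝ}
    (hu : StrongConcaveOn (closedBall z ρ) m u) (hρ : 0 < ρ)
    (hgrad : ∀ᵐ x ∂μ, x ∈ ball z ρ → DifferentiableAt ℝ u x → ‖gradient u x‖ = 1) :
    ∃ p : E, ‖p‖ = 1 ∧
      ∀ y ∈ closedBall z ρ, u y ≤ u z + ⟪p, y - z⟫ - m / 2 * ‖y - z‖ ^ 2 := by
  have hz : z ∈ ball z ρ := mem_ball_self hρ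
  have hlip : LocallyLipschitzOn (ball z ρ) u :=
    hu.locallyLipschitzOn_interior.mono ball_subset_interior_closedBall
  obtain ⟨U, hU, hdiff⟩ := hlip.exists_mem_nhds_ae_differentiableAt μ isOpen_ball hz
  have hclosure : z ∈ closure
      {x | x ∈ closedBall z ρ ∧ DifferentiableAt ℝ u x ∧ ‖gradient u x‖ = 1} := by
    refine mem_closure_setOf_of_ae (μ := μ) (inter_mem hU (isOpen_ball.mem_nhds hz)) ?_
    filter_upwards [hdiff, hgrad] with x hxU hx hxz
    exact ⟨ball_subset_closedBall hxz.2, hxU hxz.1, hx hxz.2 (hxU hxz.1)⟩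
  obtain ⟨x, hx, hxz⟩ := mem_closure_iff_seq_limit.1 hclosure
  obtain ⟨p, hp, φ, hφ, hpφ⟩ := (isCompact_sphere (0 : E) 1).tendsto_subseq
    (x := fun j ↦ gradient u (x j)) (fun j ↦ by simpa using (hx j).2.2)
  refine ⟨p, by simpa using hp, fun y hy ↦ ?_⟩
  have hxφ := hxz.comp hφ.tendsto_atTop
  have hcont : ContinuousAt u z := hlip.continuousOn.continuousAt (isOpen_ball.mem_nhds hz)
  have hsub : Tendsto (fun j ↦ y - x (φ j)) atTop (𝓝 (y - z)) := tendsto_const_nhds.sub hxφ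
  refine le_of_tendsto_of_tendsto' tendsto_const_nhds
    (((hcont.tendsto.comp hxφ).add (hpφ.inner hsub)).sub ((hsub.norm.pow 2).const_mul _))
    fun j ↦ ?_
  have := hu.le_add_of_hasFDerivAt (hx (φ j)).1 hy (hx (φ j)).2.1.hasGradientAt.hasFDerivAt
  simpa only [InnerProductSpace.toDual_apply_apply, Function.comp_apply] using this

end InnerProduct

namespace LocallySemiconcaveOn

variable {n : ℕ} {Ω : Set (EuclideanSpace ℝ (Fin n))} {u : EuclideanSpace ℝ (Fin n) → ℝ}

/-- Semiconcavity with constant `C` is Mathlib's strong concavity with negative modulus `-C`. -/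
theorem exists_strongConcaveOn (hsc : LocallySemiconcaveOn Ω u)
    {K : Set (EuclideanSpace ℝ (Fin n))} (hKΩ : K ⊆ Ω) (hK : IsCompact K) :
    ∃ C : ℝ, ∀ B ⊆ K, Convex ℝ B → StrongConcaveOn B (-C) u := by
  obtain ⟨C, -, hC⟩ := hsc K hKΩ hK
  refine ⟨C, fun B hBK hB ↦ ⟨hB, fun x hx y hy a b ha hb hab ↦ ?_⟩⟩
  obtain rfl : b = 1 - a := by linarith
  have := hC x y ((hB.segment_subset hx hy).trans hBK) a ⟨ha, by linarith⟩
  simp only [smul_eq_mul]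
  linarith

theorem exists_unit_supergradient (hsc : LocallySemiconcaveOn Ω u) (hΩ : IsOpen Ω)
    (hgrad : ∀ᵐ x ∂(volume : Measure (EuclideanSpace ℝ (Fin n))),
      x ∈ Ω → DifferentiableAt ℝ u x → ‖gradient u x‖ = 1)
    {x : EuclideanSpace ℝ (Fin n)} (hx : x ∈ Ω) :
    ∃ (C : ℝ) (p : EuclideanSpace ℝ (Fin n)), ‖p‖ = 1 ∧
      ∀ᶠ y in 𝓝 x, u y ≤ u x + ⟪p, y - x⟫ + C / 2 * ‖y - x‖ ^ 2 := by
  obtain ⟨ρ, hρ, hball⟩ := nhds_basis_closedBall.mem_iff.1 (hΩ.mem_nhds hx)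
  obtain ⟨C, hC⟩ := hsc.exists_strongConcaveOn hball (isCompact_closedBall x ρ)
  obtain ⟨p, hp, hsup⟩ :=
    (hC _ subset_rfl (convex_closedBall x ρ)).exists_unit_supergradient hρ
      (hgrad.mono fun y hy hyx ↦ hy (hball (ball_subset_closedBall hyx)))
  refine ⟨C, p, hp, eventually_of_mem (closedBall_mem_nhds x hρ) fun y hy ↦ ?_⟩
  simpa [neg_div] using hsup y hy

theorem abs_sub_le_norm_sub (hsc : LocallySemiconcaveOn Ω u) (hΩ : IsOpen Ω)
    (hu : ContinuousOn u (closure Ω))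
    (hgrad : ∀ᵐ x ∂(volume : Measure (EuclideanSpace ℝ (Fin n))),
      x ∈ Ω → DifferentiableAt ℝ u x → ‖gradient u x‖ = 1)
    {a b : EuclideanSpace ℝ (Fin n)} (hab : segment ℝ a b ⊆ Ω) :
    |u b - u a| ≤ ‖b - a‖ := by
  have hle : ∀ a b, segment ℝ a b ⊆ Ω → u b ≤ u a + ‖b - a‖ := fun a b hab ↦ by
    refine le_add_norm_sub_of_forall_eventually_le (hu.mono (hab.trans subset_closure))
      fun x hx ↦ ?_
    obtain ⟨C, p, hp, hsup⟩ := hsc.exists_unit_supergradient hΩ hgrad (hab hx)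
    refine ⟨C / 2, hsup.mono fun y hy ↦ ?_⟩
    have := real_inner_le_norm p (y - x)
    rw [hp, one_mul] at this
    linarith
  rw [abs_sub_le_iff]
  constructor
  · linarith [hle a b hab]
  · linarith [hle b a (segment_symm ℝ a b ▸ hab), norm_sub_rev a b]

theorem abs_le_infDist_frontier (hsc : LocallySemiconcaveOn Ω u) (hΩ : IsOpen Ω)
    (hne : Ω ≠ univ) (hu : ContinuousOn u (closure Ω)) (hu0 : ∀ x ∈ frontier Ω, u x = 0)
    (hgrad : ∀ᵐ x ∂(volume : Measure (EuclideanSpace ℝ (Fin n))),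
      x ∈ Ω → DifferentiableAt ℝ u x → ‖gradient u x‖ = 1)
    {x : EuclideanSpace ℝ (Fin n)} (hx : x ∈ Ω) : |u x| ≤ infDist x (frontier Ω) :=
  _root_.abs_le_infDist_frontier hΩ hne hu hu0
    (fun _ _ ↦ hsc.abs_sub_le_norm_sub hΩ hu hgrad) hx

theorem exists_descent_step (hsc : LocallySemiconcaveOn Ω u) (hΩ : IsOpen Ω)
    (hΩb : Bornology.IsBounded Ω)
    (hgrad : ∀ᵐ x ∂(volume : Measure (EuclideanSpace ℝ (Fin n))),
      x ∈ Ω → DifferentiableAt ℝ u x → ‖gradient u x‖ = 1)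
    {ε : ℝ} (hε : 0 < ε) :
    ∃ C : ℝ, ∀ y ∈ Ω, ε ≤ infDist y (frontier Ω) → ∀ h ∈ Ioc 0 (ε / 2),
      ∃ y' ∈ Ω, dist y' y ≤ h ∧ u y' ≤ u y - h + C / 2 * h ^ 2 := by
  set K := {y | ε / 2 ≤ infDist y (frontier Ω)} ∩ closure Ω
  have hKc : IsCompact K :=
    hΩb.isCompact_closure.of_isClosed_subset
      ((isClosed_le continuous_const (continuous_infDist_pt _)).inter isClosed_closure)
      inter_subset_right
  have hKΩ : K ⊆ Ω := fun y ⟨hyd, hycl⟩ ↦ by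
    by_contra hyΩ
    have : infDist y (frontier Ω) = 0 := infDist_zero_of_mem (hΩ.frontier_eq ▸ ⟨hycl, hyΩ⟩)
    exact (half_pos hε).not_ge (this ▸ hyd)
  obtain ⟨C, hC⟩ := hsc.exists_strongConcaveOn hKΩ hKc
  refine ⟨C, fun y hy hεy h hh ↦ ?_⟩
  have hball : closedBall y (ε / 2) ⊆ K := fun w hw ↦ by
    have hwy : dist y w ≤ ε / 2 := dist_comm w y ▸ hw
    refine ⟨?_, subset_closure (hΩ.ball_infDist_frontier_subset hy ?_)⟩
    · show ε / 2 ≤ infDist w (frontier Ω)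
      linarith [infDist_le_infDist_add_dist (x := y) (y := w) (s := frontier Ω)]
    · rw [mem_ball, dist_comm]; linarith
  obtain ⟨p, hp, hsup⟩ := (hC _ hball (convex_closedBall y _)).exists_unit_supergradient
    (half_pos hε) (hgrad.mono fun w hw hwy ↦ hw (hKΩ (hball (ball_subset_closedBall hwy))))
  have hstep : ‖(y - h • p) - y‖ = h := by
    rw [sub_sub_cancel_left, norm_neg, norm_smul, hp, mul_one, Real.norm_of_nonneg hh.1.le]
  have hmem : y - h • p ∈ closedBall y (ε / 2) := by
    rw [mem_closedBall, dist_eq_norm, hstep]; exact hh.2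
  refine ⟨y - h • p, hKΩ (hball hmem), by rw [dist_eq_norm, hstep], ?_⟩
  have := hsup _ hmem
  rw [hstep, sub_sub_cancel_left, inner_neg_right, real_inner_smul_right,
    real_inner_self_eq_norm_sq, hp] at this
  linarith

theorem infDist_frontier_le (hsc : LocallySemiconcaveOn Ω u) (hΩ : IsOpen Ω)
    (hΩb : Bornology.IsBounded Ω) (hne : Ω ≠ univ) (hu : ContinuousOn u (closure Ω))
    (hu0 : ∀ x ∈ frontier Ω, u x = 0)
    (hgrad : ∀ᵐ x ∂(volume : Measure (EuclideanSpace ℝ (Fin n))),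
      x ∈ Ω → DifferentiableAt ℝ u x → ‖gradient u x‖ = 1)
    {x : EuclideanSpace ℝ (Fin n)} (hx : x ∈ Ω) : infDist x (frontier Ω) ≤ u x := by
  obtain ⟨B, hB⟩ := hΩb.isCompact_closure.exists_bound_of_continuousOn hu
  suffices h : ∀ ε > 0, infDist x (frontier Ω) - ε ≤ u x + ε by
    refine le_of_forall_pos_le_add fun ε hε ↦ ?_
    linarith [h (ε / 2) (half_pos hε)]
  intro ε hε
  obtain ⟨C, hstep⟩ := hsc.exists_descent_step hΩ hΩb hgrad hε
  have hC : ∀ᶠ h in 𝓝[>] (0 : ℝ), C / 2 * h < 1 :=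
    (((continuous_const_mul (C / 2)).tendsto' 0 0 (mul_zero _)).mono_left
      nhdsWithin_le_nhds).eventually (gt_mem_nhds one_pos)
  -- `(dist(x, ∂Ω) - ε) (1 - C h / 2) ≤ u x + ε` for every small step length `h > 0`
  refine le_of_tendsto (x := 𝓝[>] (0 : ℝ))
    (f := fun h ↦ (infDist x (frontier Ω) - ε) * (1 - C / 2 * h)) ?_ ?_
  · have : Continuous fun h : ℝ ↦ (infDist x (frontier Ω) - ε) * (1 - C / 2 * h) := by
      fun_prop
    simpa using (this.tendsto 0).mono_left nhdsWithin_le_nhds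
  filter_upwards [Ioc_mem_nhdsGT (half_pos hε), hC] with h hh hCh
  obtain ⟨y, ⟨hyΩ, hyε⟩, k, hyx, hyu⟩ := exists_mem_diff_of_forall_descent
    (G := {y | ε ≤ infDist y (frontier Ω)}) (h := h) (c := h * (1 - C / 2 * h)) (B := -B)
    (mul_pos hh.1 (sub_pos.2 hCh))
    (fun y hy ↦ neg_le_of_abs_le ((Real.norm_eq_abs _).symm ▸ hB y (subset_closure hy)))
    (fun y ⟨hyΩ, hyε⟩ ↦ by
      obtain ⟨y', hy'Ω, hy'y, hu'⟩ := hstep y hyΩ hyε h hh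
      exact ⟨y', hy'Ω, hy'y, by linarith⟩)
    hx
  have hyd : infDist y (frontier Ω) < ε := not_le.1 hyε
  have huy : -infDist y (frontier Ω) ≤ u y :=
    neg_le_of_abs_le (hsc.abs_le_infDist_frontier hΩ hne hu hu0 hgrad hyΩ)
  have hdist : infDist x (frontier Ω) - ε ≤ k * h := by
    linarith [infDist_le_infDist_add_dist (x := x) (y := y) (s := frontier Ω), dist_comm x y]
  calc (infDist x (frontier Ω) - ε) * (1 - C / 2 * h)
      ≤ k * h * (1 - C / 2 * h) := mul_le_mul_of_nonneg_right hdist (sub_pos.2 hCh).le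
    _ ≤ u x + ε := by linarith

end LocallySemiconcaveOn

theorem eikonal_solution_rigidity
    {n : ℕ} (Ω : Set (EuclideanSpace ℝ (Fin n)))
    (hΩopen : IsOpen Ω) (hΩbdd : Bornology.IsBounded Ω)
    (u : EuclideanSpace ℝ (Fin n) → ℝ)
    (hu : ContinuousOn u (closure Ω))
    (hu0 : ∀ x ∈ frontier Ω, u x = 0)
    (hsc : LocallySemiconcaveOn Ω u)
    (hgrad : ∀ᵐ x ∂(volume : Measure (EuclideanSpace ℝ (Fin n))),
      x ∈ Ω → DifferentiableAt ℝ u x → ‖gradient u x‖ = 1) :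
    ∀ x ∈ Ω, u x = Metric.infDist x (frontier Ω) := by
  intro x hx
  -- In dimension `0` the whole space is bounded; a unit supergradient excludes this case.
  have hne : Ω ≠ univ := by
    obtain ⟨-, p, hp, -⟩ := hsc.exists_unit_supergradient hΩopen hgrad hx
    have : Nontrivial (EuclideanSpace ℝ (Fin n)) :=
      nontrivial_of_ne p 0 (by rintro rfl; simp at hp)
    rintro rfl
    exact NormedSpace.unbounded_univ ℝ _ hΩbdd
  exact le_antisymm
    ((le_abs_self _).trans (hsc.abs_le_infDist_frontier hΩopen hne hu hu0 hgrad hx))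
    (hsc.infDist_frontier_le hΩopen hΩbdd hne hu hu0 hgrad hx)
end
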